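/- For every trajectory x in E([0,T], S_d), R_∞ x = x; consequently R_∞ : 𝔼([0,T], S_d) → E([0,T], S_d) is a projection (idempotent onto E). -/

import Mathlib

open Filter Topology Set

noncomputable section
namespace Soft

abbrev Sd := ℕ∞

noncomputable def sval (k : Sd) : ℝ := if k = ⊤ then 0 else 1 / ((k.toNat : ℝ) + 1)

noncomputable def sdist (k j : Sd) : ℝ := |sval k - sval j|

/-- left-limit filter within `[0,T]` -/
def lf (T t : ℝ) : Filter ℝ := 𝓝[Set.Icc 0 T ∩ Set.Iio t] t

/-- right-limit filter within `[0,T]` -/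
def rf (T t : ℝ) : Filter ℝ := 𝓝[Set.Icc 0 T ∩ Set.Ioi t] t

def leftLim (T : ℝ) (x : ℝ → Sd) (t : ℝ) (L : Sd) : Prop := Tendsto x (lf T t) (𝓝 L)

def rightLim (T : ℝ) (x : ℝ → Sd) (t : ℝ) (L : Sd) : Prop := Tendsto x (rf T t) (𝓝 L)

/-- the set of cluster points of `x(s)`, `s ↑ t`, is exactly the pair `{n, ∞}` -/
def softLeftPair (T : ℝ) (x : ℝ → Sd) (t : ℝ) (n : ℕ) : Prop :=
  {L : Sd | MapClusterPt L (lf T t) x} = {(n : Sd), ⊤}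

def softRightPair (T : ℝ) (x : ℝ → Sd) (t : ℝ) (n : ℕ) : Prop :=
  {L : Sd | MapClusterPt L (rf T t) x} = {(n : Sd), ⊤}

/-- `x` has a soft left-limit at `t` -/
def softLeftLim (T : ℝ) (x : ℝ → Sd) (t : ℝ) : Prop :=
  (∃ L, leftLim T x t L) ∨ ∃ n : ℕ, softLeftPair T x t n

/-- `x` is soft right-continuous at `t` -/
def softRightCont (T : ℝ) (x : ℝ → Sd) (t : ℝ) : Prop :=
  rightLim T x t ⊤ ∨ (∃ n : ℕ, rightLim T x t (n : Sd) ∧ x t = (n : Sd)) ∨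
    ∃ n : ℕ, softRightPair T x t n ∧ x t = (n : Sd)

/-- the space `𝔼([0,T], S_d)` of soft right-continuous trajectories with soft left-limits -/
def memBbE (T : ℝ) (x : ℝ → Sd) : Prop :=
  (∀ t ∈ Set.Icc 0 T, softRightCont T x t) ∧ ∀ t ∈ Set.Ioc 0 T, softLeftLim T x t

/-- time of last visit before `t` to the set `{k : P k}` (with the convention `= 0`
if there is no such visit, since `sSup ∅ = 0` in `ℝ`) -/
def lastVisit (P : Sd → Prop) (x : ℝ → Sd) (t : ℝ) : ℝ :=
  sSup {s | s ∈ Set.Icc 0 t ∧ P (x s)}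

open Classical in
/-- the record operator: the last value in `{k : P k}` visited by `x` before time `t`;
equal to the bottom state `0` before the first visit -/
noncomputable def srec (T : ℝ) (P : Sd → Prop) (x : ℝ → Sd) (t : ℝ) : Sd :=
  if ∃ s ∈ Set.Icc 0 t, P (x s) then
    if P (x (lastVisit P x t)) then x (lastVisit P x t)
    else if h : ∃ L, leftLim T x (lastVisit P x t) L then h.choose
    else if h2 : ∃ n : ℕ, softLeftPair T x (lastVisit P x t) n then (h2.choose : Sd)
    else 0
  else 0

/-- `R_m`, the operator recording the last site visited in `S_m = {0,…,m}` -/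
noncomputable def Rm (T : ℝ) (m : ℕ) (x : ℝ → Sd) : ℝ → Sd :=
  srec T (fun k => k ≤ (m : Sd)) x

/-- `R_∞`, the operator recording the last site visited in `ℕ` -/
noncomputable def Rinf (T : ℝ) (x : ℝ → Sd) : ℝ → Sd := srec T (fun k => k ≠ ⊤) x

/-- `σ_∞(t)`, the time of the last visit to `ℕ` before `t` -/
def sigmaInf (x : ℝ → Sd) (t : ℝ) : ℝ := lastVisit (fun k => k ≠ ⊤) x t

/-- `D([0,T], S_m)`: càdlàg trajectories with values in `S_m = {0,…,m}` -/
def memD (T : ℝ) (m : ℕ) (x : ℝ → Sd) : Prop :=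
  (∀ t ∈ Set.Icc 0 T, x t ≤ (m : Sd)) ∧
  (∀ t ∈ Set.Ico 0 T, rightLim T x t (x t)) ∧
  ∀ t ∈ Set.Ioc 0 T, ∃ L, leftLim T x t L

/-- `D([0,T], S_d)`: càdlàg trajectories with values in `S_d` -/
def memDd (T : ℝ) (x : ℝ → Sd) : Prop :=
  (∀ t ∈ Set.Ico 0 T, rightLim T x t (x t)) ∧
  ∀ t ∈ Set.Ioc 0 T, ∃ L, leftLim T x t L

/-- the space `E([0,T], S_d)` -/
def memE (T : ℝ) (x : ℝ → Sd) : Prop :=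
  memBbE T x ∧ x 0 ≠ ⊤ ∧
  ∀ t ∈ Set.Ioc 0 T, x t = ⊤ →
    0 < sigmaInf x t ∧ x (sigmaInf x t) = ⊤ ∧ leftLim T x (sigmaInf x t) ⊤

/-- `Λ_T(x)`, the time spent at `∞` -/
noncomputable def LambdaT (T : ℝ) (x : ℝ → Sd) : ℝ :=
  (MeasureTheory.volume {s | s ∈ Set.Icc 0 T ∧ x s = ⊤}).toReal

/-- `D^*([0,T], S_d)`: càdlàg trajectories spending no time at `∞`, continuous at `T` -/
def memDstar (T : ℝ) (x : ℝ → Sd) : Prop :=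
  memDd T x ∧ LambdaT T x = 0 ∧ leftLim T x T (x T)

/-- `E^*([0,T], S_d)`: the image of `D^*([0,T], S_d)` under `R_∞` -/
def memEstar (T : ℝ) (x : ℝ → Sd) : Prop :=
  memE T x ∧ ∃ y, memDstar T y ∧ Set.EqOn (Rinf T y) x (Set.Icc 0 T)

/-- the set `Λ` of time changes: increasing continuous bijections of `[0,T]` fixing `0, T` -/
def TimeChange (T : ℝ) (l : ℝ → ℝ) : Prop :=
  l 0 = 0 ∧ l T = T ∧ ContinuousOn l (Set.Icc 0 T) ∧ StrictMonoOn l (Set.Icc 0 T) ∧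
    Set.MapsTo l (Set.Icc 0 T) (Set.Icc 0 T)

/-- the Skorohod metric -/
noncomputable def dS (T : ℝ) (x y : ℝ → Sd) : ℝ :=
  sInf {a : ℝ | ∃ l, TimeChange T l ∧
    (∀ t ∈ Set.Icc 0 T, sdist (x t) (y (l t)) ≤ a) ∧
    ∀ s ∈ Set.Icc 0 T, ∀ t ∈ Set.Icc 0 T, s < t → |Real.log ((l t - l s) / (t - s))| ≤ a}

/-- the soft metric `d(x,y) = Σ_m 2^{-(m+1)} d_S(R_m x, R_m y)` -/
noncomputable def dE (T : ℝ) (x y : ℝ → Sd) : ℝ :=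
  ∑' m : ℕ, (1 / 2 : ℝ) ^ (m + 1) * dS T (Rm T m x) (Rm T m y)

/-- the left endpoints of the maximal intervals on which `x = j` -/
def entryPoints (T : ℝ) (j : Sd) (x : ℝ → Sd) : Set ℝ :=
  {t | t ∈ Set.Icc 0 T ∧ x t = j ∧
    (t = 0 ∨ ∀ δ > 0, ∃ s ∈ Set.Ioo (t - δ) t ∩ Set.Icc 0 T, x s ≠ j)}

/-- `N_j(x)`, the number of visits of `x` to `j` -/
noncomputable def Nvisits (T : ℝ) (j : Sd) (x : ℝ → Sd) : ℕ := (entryPoints T j x).ncard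

/-- the start of the `(l+1)`-th visit to `j` (0-indexed) -/
noncomputable def nthEntry (T : ℝ) (j : Sd) (x : ℝ → Sd) (l : ℕ) : ℝ :=
  sInf {e | e ∈ entryPoints T j x ∧ {s | s ∈ entryPoints T j x ∧ s < e}.ncard = l}

noncomputable def exitTime (T : ℝ) (j : Sd) (x : ℝ → Sd) (t : ℝ) : ℝ :=
  sInf ({s | s ∈ Set.Ioc t T ∧ x s ≠ j} ∪ {T})

/-- `T_{j,l}(x)`, the length of the `l`-th holding interval at `j` (1-indexed),
`0` if `l > N_j(x)` -/
noncomputable def holdingTime (T : ℝ) (j : Sd) (x : ℝ → Sd) (l : ℕ) : ℝ :=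
  if 1 ≤ l ∧ l ≤ Nvisits T j x then
    exitTime T j x (nthEntry T j x (l - 1)) - nthEntry T j x (l - 1)
  else 0

end Soft

/-!
Between two visits to `ℕ`, `R_∞ x` is frozen at the value it recorded last; at a visit it
equals `x`. So for `x ∈ E` only the times with `x t = ∞` need care, and there the definition
of `E` says that `x` tends to `∞` just before the last visit `σ_∞(t)`, which is what `R_∞`
records.

For idempotence it remains to see that `R_∞ x ∈ E` for every `x ∈ 𝔼`. Near a time approached
by visits to `ℕ`, every value of `R_∞ x` is a value or a left cluster value of `x` inside the
same window, so each closed set eventually containing `x` eventually contains `R_∞ x`, and the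
cluster values of `R_∞ x` are among those of `x`. In the compact space `ℕ∞` the soft limit
conditions only say that the cluster set lies in some `{n, ∞}`, so they pass from `x` to
`R_∞ x`. Near any other time `R_∞ x` is locally constant.
-/

theorem MapClusterPt.eq_of_tendsto {α X : Type*} [TopologicalSpace X] [T2Space X]
    {l : Filter α} {y : α → X} {L L' : X} (hL' : MapClusterPt L' l y)
    (h : Tendsto y l (𝓝 L)) : L' = L :=
  eq_of_nhds_neBot (ClusterPt.mono hL' h)

theorem mapClusterPt_of_forall_eventually_mem {α X : Type*} [TopologicalSpace X]
    {l : Filter α} {x y : α → X} {L : X}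
    (h : ∀ S, IsClosed S → (∀ᶠ a in l, x a ∈ S) → ∀ᶠ a in l, y a ∈ S)
    (hy : MapClusterPt L l y) : MapClusterPt L l x := by
  rw [(nhds_basis_opens L).mapClusterPt_iff_frequently] at hy ⊢
  rintro U ⟨hLU, hU⟩
  by_contra hx
  exact hy U ⟨hLU, hU⟩ (h Uᶜ hU.isClosed_compl (not_frequently.mp hx))

namespace Soft

section ClusterSet

variable {α : Type*} {l : Filter α} {y : α → Sd} {n : ℕ}

theorem tendsto_or_clusterPts_eq_pair (h : {L | MapClusterPt L l y} ⊆ {(n : Sd), ⊤}) :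
    Tendsto y l (𝓝 ⊤) ∨ Tendsto y l (𝓝 n) ∨
      {L | MapClusterPt L l y} = {(n : Sd), ⊤} := by
  by_cases htop : MapClusterPt ⊤ l y
  · by_cases hn : MapClusterPt (n : Sd) l y
    · exact Or.inr (Or.inr (h.antisymm (insert_subset hn (singleton_subset_iff.mpr htop))))
    · refine Or.inl (tendsto_nhds_of_unique_mapClusterPt fun L hL => ?_)
      exact (h hL).resolve_left (by rintro rfl; exact hn hL)
  · refine Or.inr (Or.inl (tendsto_nhds_of_unique_mapClusterPt fun L hL => ?_))
    exact (h hL).resolve_right (by rintro rfl; exact htop hL)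

end ClusterSet

section SoftLimits

variable {T t : ℝ} {x : ℝ → Sd}

theorem softLeftLim_iff :
    softLeftLim T x t ↔ ∃ n : ℕ, {L | MapClusterPt L (lf T t) x} ⊆ {(n : Sd), ⊤} := by
  constructor
  · rintro (⟨L, hL⟩ | ⟨n, hp⟩)
    · induction L using ENat.recTopCoe with
      | top => exact ⟨0, fun L' hL' => Or.inr (hL'.eq_of_tendsto hL)⟩
      | coe m => exact ⟨m, fun L' hL' => Or.inl (hL'.eq_of_tendsto hL)⟩
    · exact ⟨n, Eq.subset hp⟩
  · rintro ⟨n, h⟩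
    rcases tendsto_or_clusterPts_eq_pair h with h | h | h
    · exact Or.inl ⟨⊤, h⟩
    · exact Or.inl ⟨n, h⟩
    · exact Or.inr ⟨n, h⟩

theorem softRightCont_iff :
    softRightCont T x t ↔ {L | MapClusterPt L (rf T t) x} ⊆ {⊤} ∨
      ∃ n : ℕ, x t = n ∧ {L | MapClusterPt L (rf T t) x} ⊆ {(n : Sd), ⊤} := by
  constructor
  · rintro (h | ⟨n, h, hxt⟩ | ⟨n, hp, hxt⟩)
    · exact Or.inl fun L hL => hL.eq_of_tendsto h
    · exact Or.inr ⟨n, hxt, fun L hL => Or.inl (hL.eq_of_tendsto h)⟩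
    · exact Or.inr ⟨n, hxt, Eq.subset hp⟩
  · rintro (h | ⟨n, hxt, h⟩)
    · exact Or.inl (tendsto_nhds_of_unique_mapClusterPt h)
    · rcases tendsto_or_clusterPts_eq_pair h with h | h | h
      · exact Or.inl h
      · exact Or.inr (Or.inl ⟨n, h, hxt⟩)
      · exact Or.inr (Or.inr ⟨n, h, hxt⟩)

theorem softRightCont_of_tendsto (h : Tendsto x (rf T t) (𝓝 (x t))) : softRightCont T x t := by
  induction hxt : x t using ENat.recTopCoe with
  | top => exact Or.inl (hxt ▸ h)
  | coe n => exact Or.inr (Or.inl ⟨n, hxt ▸ h, hxt⟩)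

theorem softLeftPair_unique {m n : ℕ} (hm : softLeftPair T x t m) (hn : softLeftPair T x t n) :
    m = n := by
  have hpair : ({(m : Sd), ⊤} : Set Sd) = {(n : Sd), ⊤} := hm.symm.trans hn
  simpa [pair_eq_pair_iff] using hpair

end SoftLimits

theorem lf_basis (T t : ℝ) :
    (lf T t).HasBasis (· < t) fun a => Ioo a t ∩ Icc 0 T := by
  rw [lf, inter_comm, nhdsWithin_inter']
  exact (nhdsLT_basis t).inf_principal _

theorem rf_basis (T t : ℝ) :
    (rf T t).HasBasis (t < ·) fun b => Ioo t b ∩ Icc 0 T := by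
  rw [rf, inter_comm, nhdsWithin_inter']
  exact (nhdsGT_basis t).inf_principal _

theorem lf_neBot {T t : ℝ} (ht : t ∈ Ioc 0 T) : (lf T t).NeBot := by
  refine (lf_basis T t).neBot_iff.mpr fun {a} hat => ?_
  obtain ⟨s, hs⟩ := exists_between (max_lt hat ht.1)
  exact ⟨s, ⟨(le_max_left _ _).trans_lt hs.1, hs.2⟩, (le_max_right _ _).trans hs.1.le,
    hs.2.le.trans ht.2⟩

section Record

variable {T : ℝ} {P : Sd → Prop} {x : ℝ → Sd} {t u : ℝ}

theorem le_lastVisit (hu : u ∈ Icc 0 t) (hP : P (x u)) : u ≤ lastVisit P x t :=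
  le_csSup ⟨t, fun _ hv => hv.1.2⟩ ⟨hu, hP⟩

theorem lastVisit_le (hne : ∃ s ∈ Icc 0 t, P (x s)) : lastVisit P x t ≤ t :=
  csSup_le hne fun _ hv => hv.1.2

theorem lastVisit_nonneg (hne : ∃ s ∈ Icc 0 t, P (x s)) : 0 ≤ lastVisit P x t :=
  let ⟨_, hs, hP⟩ := hne
  hs.1.trans (le_lastVisit hs hP)

theorem lastVisit_eq_self (h0 : 0 ≤ t) (hP : P (x t)) : lastVisit P x t = t :=
  (lastVisit_le ⟨t, ⟨h0, le_rfl⟩, hP⟩).antisymm (le_lastVisit ⟨h0, le_rfl⟩ hP)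

theorem not_of_lastVisit_lt (hne : ∃ s ∈ Icc 0 t, P (x s)) (hu : lastVisit P x t < u)
    (hut : u ≤ t) : ¬P (x u) := fun hP =>
  hu.not_ge (le_lastVisit ⟨(lastVisit_nonneg hne).trans hu.le, hut⟩ hP)

theorem lastVisit_pos (hne : ∃ s ∈ Icc 0 t, P (x s)) (hσ : ¬P (x (lastVisit P x t))) :
    0 < lastVisit P x t := by
  obtain ⟨s, hs, hP⟩ := hne
  refine (lastVisit_nonneg ⟨s, hs, hP⟩).lt_of_ne fun h0 => hσ ?_
  rwa [← (le_lastVisit hs hP).antisymm (h0 ▸ hs.1)]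

theorem frequently_lastVisit (hne : ∃ s ∈ Icc 0 t, P (x s)) (hσ : ¬P (x (lastVisit P x t)))
    (htT : t ≤ T) : ∃ᶠ u in lf T (lastVisit P x t), P (x u) := by
  refine (lf_basis T _).frequently_iff.mpr fun a haσ => ?_
  obtain ⟨u, ⟨hu, hP⟩, hau⟩ := exists_lt_of_lt_csSup hne haσ
  have huσ : u < lastVisit P x t := (le_lastVisit hu hP).lt_of_ne fun h => hσ (h ▸ hP)
  exact ⟨u, ⟨⟨hau, huσ⟩, hu.1, hu.2.trans htT⟩, hP⟩

theorem srec_eq_zero_of_not_exists (h : ¬∃ s ∈ Icc 0 t, P (x s)) : srec T P x t = 0 := by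
  rw [srec, if_neg h]

theorem srec_eq_apply_lastVisit (hne : ∃ s ∈ Icc 0 t, P (x s)) (hσ : P (x (lastVisit P x t))) :
    srec T P x t = x (lastVisit P x t) := by
  rw [srec, if_pos hne, if_pos hσ]

theorem srec_eq_self (h0 : 0 ≤ t) (hP : P (x t)) : srec T P x t = x t := by
  have hσ := lastVisit_eq_self h0 hP
  rw [srec_eq_apply_lastVisit ⟨t, ⟨h0, le_rfl⟩, hP⟩ (by rwa [hσ]), hσ]

theorem srec_eq_of_leftLim [(lf T (lastVisit P x t)).NeBot] {L : Sd}
    (hne : ∃ s ∈ Icc 0 t, P (x s)) (hσ : ¬P (x (lastVisit P x t)))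
    (hL : leftLim T x (lastVisit P x t) L) : srec T P x t = L := by
  have hex : ∃ L, leftLim T x (lastVisit P x t) L := ⟨L, hL⟩
  rw [srec, if_pos hne, if_neg hσ, dif_pos hex]
  exact tendsto_nhds_unique hex.choose_spec hL

theorem srec_eq_of_softLeftPair {n : ℕ} (hne : ∃ s ∈ Icc 0 t, P (x s))
    (hσ : ¬P (x (lastVisit P x t))) (hp : softLeftPair T x (lastVisit P x t) n) :
    srec T P x t = n := by
  have hnoL : ¬∃ L, leftLim T x (lastVisit P x t) L := by
    rintro ⟨L, hL⟩
    have hn : MapClusterPt (n : Sd) _ x := Eq.superset hp (mem_insert _ _)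
    have htop : MapClusterPt ⊤ _ x := Eq.superset hp (mem_insert_of_mem _ rfl)
    exact ENat.natCast_ne_top n ((hn.eq_of_tendsto hL).trans (htop.eq_of_tendsto hL).symm)
  have hex : ∃ m : ℕ, softLeftPair T x (lastVisit P x t) m := ⟨n, hp⟩
  rw [srec, if_pos hne, if_neg hσ, dif_neg hnoL, dif_pos hex,
    softLeftPair_unique hex.choose_spec hp]

theorem srec_eq_of_forall_not {t' : ℝ} (htt' : t ≤ t') (h : ∀ u ∈ Ioc t t', ¬P (x u)) :
    srec T P x t' = srec T P x t := by
  have hvis : {s | s ∈ Icc 0 t' ∧ P (x s)} = {s | s ∈ Icc 0 t ∧ P (x s)} := by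
    ext u
    refine ⟨fun ⟨hu, hP⟩ => ⟨⟨hu.1, not_lt.mp fun htu => h u ⟨htu, hu.2⟩ hP⟩, hP⟩,
      fun ⟨hu, hP⟩ => ⟨⟨hu.1, hu.2.trans htt'⟩, hP⟩⟩
  have hex : (∃ s ∈ Icc 0 t', P (x s)) = ∃ s ∈ Icc 0 t, P (x s) :=
    congrArg Set.Nonempty hvis
  have hσ : lastVisit P x t' = lastVisit P x t := congrArg sSup hvis
  rw [srec, srec, hex, hσ]

theorem mapClusterPt_srec (hbb : memBbE T x) (hne : ∃ s ∈ Icc 0 t, P (x s))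
    (hσ : ¬P (x (lastVisit P x t))) (htT : t ≤ T) :
    MapClusterPt (srec T P x t) (lf T (lastVisit P x t)) x := by
  have hσ' : lastVisit P x t ∈ Ioc 0 T :=
    ⟨lastVisit_pos hne hσ, (lastVisit_le hne).trans htT⟩
  have := lf_neBot hσ'
  rcases hbb.2 _ hσ' with ⟨L, hL⟩ | ⟨n, hp⟩
  · rw [srec_eq_of_leftLim hne hσ hL]
    exact Tendsto.mapClusterPt hL
  · rw [srec_eq_of_softLeftPair hne hσ hp]
    exact Eq.superset hp (mem_insert _ _)

theorem srec_mem_of_forall_mem (hbb : memBbE T x) {S : Set Sd} (hS : IsClosed S) {a s u₀ : ℝ}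
    (hsT : s ≤ T) (hu₀ : u₀ ∈ Ioc a s) (hu₀0 : 0 ≤ u₀) (hPu₀ : P (x u₀))
    (hW : ∀ u ∈ Ioc a s, 0 ≤ u → x u ∈ S) : srec T P x s ∈ S := by
  have hne : ∃ v ∈ Icc 0 s, P (x v) := ⟨u₀, ⟨hu₀0, hu₀.2⟩, hPu₀⟩
  have haσ : a < lastVisit P x s := hu₀.1.trans_le (le_lastVisit ⟨hu₀0, hu₀.2⟩ hPu₀)
  by_cases hσ : P (x (lastVisit P x s))
  · rw [srec_eq_apply_lastVisit hne hσ]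
    exact hW _ ⟨haσ, lastVisit_le hne⟩ (lastVisit_nonneg hne)
  · refine hS.mem_of_mapClusterPt (mapClusterPt_srec hbb hne hσ hsT) ?_
    refine (lf_basis T _).eventually_iff.mpr ⟨a, haσ, fun u hu => ?_⟩
    exact hW u ⟨hu.1.1, hu.1.2.le.trans (lastVisit_le hne)⟩ hu.2.1

theorem clusterPts_srec_subset_right (hbb : memBbE T x) (ht0 : 0 ≤ t)
    (hvis : ∀ b, t < b → ∃ u ∈ Ioc t b, P (x u)) :
    {L | MapClusterPt L (rf T t) (srec T P x)} ⊆ {L | MapClusterPt L (rf T t) x} := by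
  refine fun _ => mapClusterPt_of_forall_eventually_mem fun S hS hx => ?_
  obtain ⟨b, htb, hb⟩ := (rf_basis T t).eventually_iff.mp hx
  filter_upwards [(rf_basis T t).mem_of_mem htb] with s hs
  obtain ⟨u₀, hu₀, hP⟩ := hvis s hs.1.1
  exact srec_mem_of_forall_mem hbb hS hs.2.2 hu₀ (ht0.trans hu₀.1.le) hP
    fun u hu hu0 => hb ⟨⟨hu.1, hu.2.trans_lt hs.1.2⟩, hu0, hu.2.trans hs.2.2⟩

theorem clusterPts_srec_subset_left (hbb : memBbE T x) (hvis : ∃ᶠ u in lf T t, P (x u)) :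
    {L | MapClusterPt L (lf T t) (srec T P x)} ⊆ {L | MapClusterPt L (lf T t) x} := by
  refine fun _ => mapClusterPt_of_forall_eventually_mem fun S hS hx => ?_
  obtain ⟨a, hat, ha⟩ := (lf_basis T t).eventually_iff.mp hx
  obtain ⟨u₀, hP, hu₀⟩ := (hvis.and_eventually ((lf_basis T t).mem_of_mem hat)).exists
  filter_upwards [(lf_basis T t).mem_of_mem hu₀.1.2] with s hs
  exact srec_mem_of_forall_mem hbb hS hs.2.2 ⟨hu₀.1.1, hs.1.1.le⟩ hu₀.2.1 hP
    fun u hu hu0 => ha ⟨⟨hu.1, hu.2.trans_lt hs.1.2⟩, hu0, hu.2.trans hs.2.2⟩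

theorem tendsto_srec_right (h : ∃ b, t < b ∧ ∀ u ∈ Ioc t b, ¬P (x u)) :
    Tendsto (srec T P x) (rf T t) (𝓝 (srec T P x t)) := by
  obtain ⟨b, htb, hb⟩ := h
  refine tendsto_const_nhds.congr' ?_
  filter_upwards [(rf_basis T t).mem_of_mem htb] with s hs
  exact (srec_eq_of_forall_not hs.1.1.le fun u hu => hb u ⟨hu.1, hu.2.trans hs.1.2.le⟩).symm

theorem exists_tendsto_srec_left [(lf T t).NeBot] (h : ∀ᶠ u in lf T t, ¬P (x u)) :
    ∃ c, Tendsto (srec T P x) (lf T t) (𝓝 c) := by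
  obtain ⟨a, hat, ha⟩ := (lf_basis T t).eventually_iff.mp h
  obtain ⟨s₀, hs₀⟩ := Filter.nonempty_of_mem ((lf_basis T t).mem_of_mem hat)
  refine ⟨srec T P x s₀, tendsto_const_nhds.congr' ?_⟩
  filter_upwards [(lf_basis T t).mem_of_mem hs₀.1.2] with s hs
  exact (srec_eq_of_forall_not hs.1.1.le fun u hu => ha ⟨⟨hs₀.1.1.trans hu.1,
    hu.2.trans_lt hs.1.2⟩, hs₀.2.1.trans hu.1.le, hu.2.trans hs.2.2⟩).symm

end Record

section Rinf

variable {T t : ℝ} {x : ℝ → Sd}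

theorem rinf_eq_self (h0 : 0 ≤ t) (hx : x t ≠ ⊤) : Rinf T x t = x t :=
  srec_eq_self h0 hx

theorem rinf_zero_ne_top : Rinf T x 0 ≠ ⊤ := by
  by_cases h : x 0 = ⊤
  · have hno : ¬∃ s ∈ Icc (0 : ℝ) 0, x s ≠ ⊤ := fun ⟨s, hs, hxs⟩ =>
      hxs ((le_antisymm hs.2 hs.1).symm ▸ h)
    rw [Rinf, srec_eq_zero_of_not_exists hno]
    exact ENat.zero_ne_top
  · rwa [rinf_eq_self le_rfl h]

theorem eqOn_rinf_of_memE (hx : memE T x) : EqOn (Rinf T x) x (Icc 0 T) := by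
  intro t ⟨ht0, htT⟩
  by_cases hxt : x t = ⊤
  · have hpos : 0 < t := ht0.lt_of_ne fun h => hx.2.1 (h ▸ hxt)
    obtain ⟨hσpos, hσ, hσlim⟩ := hx.2.2 t ⟨hpos, htT⟩ hxt
    have hne : ∃ s ∈ Icc 0 t, x s ≠ ⊤ := ⟨0, ⟨le_rfl, ht0⟩, hx.2.1⟩
    have : (lf T (lastVisit (· ≠ ⊤) x t)).NeBot :=
      lf_neBot ⟨hσpos, (lastVisit_le hne).trans htT⟩
    rw [hxt]
    exact srec_eq_of_leftLim hne (not_not_intro hσ) hσlim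
  · exact rinf_eq_self ht0 hxt

theorem softRightCont_rinf (hbb : memBbE T x) (ht : t ∈ Icc 0 T) :
    softRightCont T (Rinf T x) t := by
  by_cases hvis : ∀ b, t < b → ∃ u ∈ Ioc t b, x u ≠ ⊤
  · have hsub := clusterPts_srec_subset_right (P := (· ≠ ⊤)) hbb ht.1 hvis
    rcases softRightCont_iff.mp (hbb.1 t ht) with h | ⟨n, hxt, h⟩
    · exact softRightCont_iff.mpr (Or.inl (hsub.trans h))
    · refine softRightCont_iff.mpr (Or.inr ⟨n, ?_, hsub.trans h⟩)
      rw [← hxt]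
      exact rinf_eq_self ht.1 (hxt ▸ ENat.natCast_ne_top n)
  · push Not at hvis
    obtain ⟨b, htb, hb⟩ := hvis
    exact softRightCont_of_tendsto
      (tendsto_srec_right ⟨b, htb, fun u hu => not_not_intro (hb u hu)⟩)

theorem softLeftLim_rinf (hbb : memBbE T x) (ht : t ∈ Ioc 0 T) :
    softLeftLim T (Rinf T x) t := by
  by_cases hvis : ∃ᶠ u in lf T t, x u ≠ ⊤
  · obtain ⟨n, h⟩ := softLeftLim_iff.mp (hbb.2 t ht)
    have hsub := clusterPts_srec_subset_left (P := (· ≠ ⊤)) hbb hvis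
    exact softLeftLim_iff.mpr ⟨n, hsub.trans h⟩
  · have := lf_neBot ht
    exact Or.inl (exists_tendsto_srec_left (P := (· ≠ ⊤)) (not_frequently.mp hvis))

theorem rinf_eq_top (hbb : memBbE T x) (htT : t ≤ T) (hyt : Rinf T x t = ⊤) :
    (∃ s ∈ Icc 0 t, x s ≠ ⊤) ∧ x (sigmaInf x t) = ⊤ ∧
      leftLim T x (sigmaInf x t) ⊤ := by
  have hne : ∃ s ∈ Icc 0 t, x s ≠ ⊤ := by
    by_contra hne
    exact ENat.zero_ne_top ((srec_eq_zero_of_not_exists hne).symm.trans hyt)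
  have hσ : x (sigmaInf x t) = ⊤ := by
    by_contra hσ
    exact hσ ((srec_eq_apply_lastVisit hne hσ).symm.trans hyt)
  have hσ' : sigmaInf x t ∈ Ioc 0 T :=
    ⟨lastVisit_pos hne (not_not_intro hσ), (lastVisit_le hne).trans htT⟩
  have : (lf T (lastVisit (· ≠ ⊤) x t)).NeBot := lf_neBot hσ'
  refine ⟨hne, hσ, ?_⟩
  rcases hbb.2 _ hσ' with ⟨L, hL⟩ | ⟨n, hp⟩
  · rwa [← srec_eq_of_leftLim hne (not_not_intro hσ) hL, ← Rinf, hyt] at hL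
  · exact absurd ((srec_eq_of_softLeftPair hne (not_not_intro hσ) hp).symm.trans hyt)
      (ENat.natCast_ne_top n)

theorem sigmaInf_rinf (hne : ∃ s ∈ Icc 0 t, x s ≠ ⊤)
    (htop : ∀ u ∈ Icc (sigmaInf x t) t, Rinf T x u = ⊤) :
    sigmaInf (Rinf T x) t = sigmaInf x t := by
  have hsub : {s | s ∈ Icc 0 t ∧ x s ≠ ⊤} ⊆ {s | s ∈ Icc 0 t ∧ Rinf T x s ≠ ⊤} :=
    fun s ⟨hs, hxs⟩ => ⟨hs, by rwa [rinf_eq_self hs.1 hxs]⟩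
  refine le_antisymm (csSup_le (hne.imp hsub) fun u ⟨hu, hRu⟩ => ?_)
    (csSup_le_csSup ⟨t, fun _ hv => hv.1.2⟩ hne hsub)
  exact not_lt.mp fun hlt => hRu (htop u ⟨hlt.le, hu.2⟩)

theorem memE_rinf (hbb : memBbE T x) : memE T (Rinf T x) := by
  refine ⟨⟨fun t ht => softRightCont_rinf hbb ht, fun t ht => softLeftLim_rinf hbb ht⟩,
    rinf_zero_ne_top, fun t ht hyt => ?_⟩
  obtain ⟨hne, hσ, hlim⟩ := rinf_eq_top hbb ht.2 hyt
  have htop : ∀ u ∈ Icc (sigmaInf x t) t, Rinf T x u = ⊤ := fun u hu =>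
    (srec_eq_of_forall_not hu.2 fun v hv =>
      not_of_lastVisit_lt hne (hu.1.trans_lt hv.1) hv.2).symm.trans hyt
  rw [sigmaInf_rinf hne htop]
  refine ⟨lastVisit_pos hne (not_not_intro hσ), htop _ ⟨le_rfl, lastVisit_le hne⟩, ?_⟩
  have hfreq := frequently_lastVisit (P := (· ≠ ⊤)) hne (not_not_intro hσ) ht.2
  exact tendsto_nhds_of_unique_mapClusterPt fun L hL =>
    MapClusterPt.eq_of_tendsto (clusterPts_srec_subset_left hbb hfreq hL) hlim

end Rinf

end Soft

open Soft Filter Topology in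
theorem stmt6_general (T : ℝ) :
    (∀ x : ℝ → Soft.Sd, Soft.memE T x → Set.EqOn (Soft.Rinf T x) x (Set.Icc 0 T)) ∧
    (∀ x : ℝ → Soft.Sd, Soft.memBbE T x → Soft.memE T (Soft.Rinf T x) ∧
      Set.EqOn (Soft.Rinf T (Soft.Rinf T x)) (Soft.Rinf T x) (Set.Icc 0 T)) :=
  ⟨fun _ hx => eqOn_rinf_of_memE hx,
    fun _ hx => ⟨memE_rinf hx, eqOn_rinf_of_memE (memE_rinf hx)⟩⟩

open Soft Filter Topology in
/-- For every `x ∈ E([0,T], S_d)`, `R_∞ x = x`; consequently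
`R_∞ : 𝔼([0,T], S_d) → E([0,T], S_d)` is an idempotent map onto `E([0,T], S_d)`. -/
theorem stmt6 (T : ℝ) (hT : 0 < T) :
    (∀ x : ℝ → Soft.Sd, Soft.memE T x → Set.EqOn (Soft.Rinf T x) x (Set.Icc 0 T)) ∧
    (∀ x : ℝ → Soft.Sd, Soft.memBbE T x → Soft.memE T (Soft.Rinf T x) ∧
      Set.EqOn (Soft.Rinf T (Soft.Rinf T x)) (Soft.Rinf T x) (Set.Icc 0 T)) :=
  stmt6_general T
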